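/- Let b=(b_0,b_1,...) and λ=(λ_0,λ_1,...) be the rational sequences with b_0=λ_0=1 and, for n≥1, b_n = 3 - 1/(F_{2n-1}·F_{2n-3}) and λ_n = 1 + 1/F_{2n-1}². Then for every n≥0, the rational number Mot_n(b,λ) is a positive integer. -/

import Mathlib

/-- A step of a Motzkin path: up `(1,1)`, down `(1,-1)`, or horizontal `(1,0)`. -/
inductive MStep : Type
  | up : MStep
  | down : MStep
  | flat : MStep
  deriving DecidableEq

instance : Fintype MStep :=
  ⟨{MStep.up, MStep.down, MStep.flat}, fun x => by cases x <;> simp⟩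

/-- The vertical displacement of a Motzkin step. -/
def MStep.val : MStep → ℤ
  | .up => 1
  | .down => -1
  | .flat => 0

/-- The height of the path after its first `k` steps. -/
def mHeight (l : List MStep) (k : ℕ) : ℤ := ((l.take k).map MStep.val).sum

/-- A list of steps is a Motzkin path if it never goes below the x-axis and ends at height 0. -/
def IsMotzkin (l : List MStep) : Prop :=
  (∀ k : ℕ, 0 ≤ mHeight l k) ∧ mHeight l l.length = 0

/-- The weight of a Motzkin path w.r.t. `(b, lam)`: a factor `b i` for every horizontal step
of height `i` and a factor `lam i` for every down step of height `i` (the height of a step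
being the `y`-coordinate of its ending point). -/
def mWeight (b lam : ℕ → ℚ) (l : List MStep) : ℚ :=
  ∏ i ∈ Finset.range l.length,
    match l.getD i MStep.up with
    | .up => 1
    | .flat => b (mHeight l (i + 1)).toNat
    | .down => lam (mHeight l (i + 1)).toNat

open Classical in
/-- `Mot_n(b,lam)`: the sum of the weights of all Motzkin paths of length `n`. -/
noncomputable def motSum (n : ℕ) (b lam : ℕ → ℚ) : ℚ :=
  ∑ f : Fin n → MStep,
    if IsMotzkin (List.ofFn f) then mWeight b lam (List.ofFn f) else 0

/-- Fibonacci numbers extended to all integer indices: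
`fibZ 0 = 0`, `fibZ 1 = 1`, `fibZ m = fibZ (m-1) + fibZ (m-2)` (so `fibZ (-1) = 1`). -/
def fibZ : ℤ → ℤ
  | Int.ofNat n => Nat.fib n
  | Int.negSucc n => (-1) ^ n * Nat.fib (n + 1)

/-!
Let `J` be the tridiagonal (Jacobi) matrix of `(b, λ)`, acting on finitely supported vectors indexed
by heights, so that `Mot_n(b, λ) = (Jⁿ e₀)₀` (first-step decomposition of paths). Let `J'` be the
Jacobi matrix of `b' = (2, 3, 3, …)`, `λ' = (1, 1, …)` and `L` the unit lower bidiagonal matrix with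
subdiagonal entries `F_{2k+1} / F_{2k-1}`. The Catalan identity `F_{2k+3} F_{2k-1} = F_{2k+1}² + 1`
gives `J L = L J'`, and `J e₀ = L e₀`, hence `J^{n+1} e₀ = L J'ⁿ e₀`. Since `L` does not change the
0-th coordinate, `Mot_{n+1}(b, λ) = Mot_n(b', λ')`, a weighted count with positive integer weights.
-/

open Finset

theorem MStep.sum_univ {M : Type*} [AddCommMonoid M] (g : MStep → M) :
    ∑ s, g s = g .up + g .down + g .flat := by
  simp [Finset.univ, Fintype.elems, add_assoc]

@[simp] theorem mHeight_zero (l : List MStep) : mHeight l 0 = 0 := by simp [mHeight]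

@[simp] theorem mHeight_nil (k : ℕ) : mHeight [] k = 0 := by simp [mHeight]

@[simp] theorem mHeight_cons_succ (s : MStep) (l : List MStep) (k : ℕ) :
    mHeight (s :: l) (k + 1) = s.val + mHeight l k := by
  simp [mHeight]

def IsMotzkinFrom (h : ℤ) (l : List MStep) : Prop :=
  (∀ k : ℕ, 0 ≤ h + mHeight l k) ∧ h + mHeight l l.length = 0

theorem isMotzkinFrom_zero {l : List MStep} : IsMotzkinFrom 0 l ↔ IsMotzkin l := by
  simp [IsMotzkinFrom, IsMotzkin]

@[simp] theorem isMotzkinFrom_nil {h : ℤ} : IsMotzkinFrom h [] ↔ h = 0 := by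
  simp only [IsMotzkinFrom, mHeight_nil, add_zero, List.length_nil]
  exact ⟨And.right, fun h0 => ⟨fun _ => h0.ge, h0⟩⟩

theorem isMotzkinFrom_cons {h : ℤ} {s : MStep} {l : List MStep} :
    IsMotzkinFrom h (s :: l) ↔ 0 ≤ h ∧ IsMotzkinFrom (h + s.val) l := by
  have split : (∀ k, 0 ≤ h + mHeight (s :: l) k) ↔ 0 ≤ h ∧ ∀ k, 0 ≤ h + s.val + mHeight l k := by
    refine ⟨fun H => ⟨by simpa using H 0, fun k => by simpa [add_assoc] using H (k + 1)⟩, ?_⟩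
    rintro ⟨h0, H⟩ (_ | k)
    · simpa using h0
    · simpa [add_assoc] using H k
  simp only [IsMotzkinFrom, split, List.length_cons, mHeight_cons_succ, add_assoc, and_assoc]

theorem not_isMotzkinFrom_of_neg {h : ℤ} (hh : h < 0) (l : List MStep) :
    ¬ IsMotzkinFrom h l :=
  fun H => hh.not_ge (by simpa using H.1 0)

def stepWeight (b lam : ℕ → ℚ) : MStep → ℤ → ℚ
  | .up, _ => 1
  | .flat, h => b h.toNat
  | .down, h => lam h.toNat

def weightFrom (b lam : ℕ → ℚ) (h : ℤ) (l : List MStep) : ℚ :=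
  ∏ i ∈ range l.length, stepWeight b lam (l.getD i .up) (h + mHeight l (i + 1))

theorem weightFrom_zero (b lam : ℕ → ℚ) (l : List MStep) :
    weightFrom b lam 0 l = mWeight b lam l := by
  refine prod_congr rfl fun i _ => ?_
  cases l.getD i .up <;> simp [stepWeight]

@[simp] theorem weightFrom_nil (b lam : ℕ → ℚ) (h : ℤ) : weightFrom b lam h [] = 1 := rfl

theorem weightFrom_cons (b lam : ℕ → ℚ) (h : ℤ) (s : MStep) (l : List MStep) :
    weightFrom b lam h (s :: l) =
      stepWeight b lam s (h + s.val) * weightFrom b lam (h + s.val) l := by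
  simp [weightFrom, prod_range_succ', mul_comm, add_assoc]

section
open Classical

noncomputable def motzkinSumFrom (b lam : ℕ → ℚ) (h : ℤ) (n : ℕ) : ℚ :=
  ∑ f : Fin n → MStep,
    if IsMotzkinFrom h (List.ofFn f) then weightFrom b lam h (List.ofFn f) else 0

theorem motzkinSumFrom_zero_eq_motSum (b lam : ℕ → ℚ) (n : ℕ) :
    motzkinSumFrom b lam 0 n = motSum n b lam := by
  refine sum_congr rfl fun f _ => ?_
  rw [weightFrom_zero]
  exact if_congr isMotzkinFrom_zero rfl rfl

theorem motzkinSumFrom_zero_right (b lam : ℕ → ℚ) (h : ℤ) :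
    motzkinSumFrom b lam h 0 = if h = 0 then 1 else 0 := by
  simp [motzkinSumFrom]

theorem motzkinSumFrom_succ (b lam : ℕ → ℚ) {h : ℤ} (hh : 0 ≤ h) (n : ℕ) :
    motzkinSumFrom b lam h (n + 1) =
      ∑ s, stepWeight b lam s (h + s.val) * motzkinSumFrom b lam (h + s.val) n := by
  rw [motzkinSumFrom, ← (Fin.consEquiv fun _ => MStep).sum_comp, Fintype.sum_prod_type]
  refine sum_congr rfl fun s _ => ?_
  have hcons (f : Fin n → MStep) : (Fin.consEquiv fun _ => MStep) (s, f) = Fin.cons s f := rfl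
  simp [motzkinSumFrom, hcons, isMotzkinFrom_cons, hh, weightFrom_cons, mul_sum]

theorem motzkinSumFrom_neg_one (b lam : ℕ → ℚ) (n : ℕ) : motzkinSumFrom b lam (-1) n = 0 := by
  simp [motzkinSumFrom, not_isMotzkinFrom_of_neg]

end

def jacobiMulVec {R : Type*} [Semiring R] (b lam v : ℕ → R) : ℕ → R
  | 0 => b 0 * v 0 + v 1
  | k + 1 => lam k * v k + b (k + 1) * v (k + 1) + v (k + 2)

theorem motzkinSumFrom_succ_eq_jacobiMulVec (b lam : ℕ → ℚ) (n : ℕ) :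
    (fun k : ℕ => motzkinSumFrom b lam k (n + 1)) =
      jacobiMulVec b lam fun k : ℕ => motzkinSumFrom b lam k n := by
  funext k
  rw [motzkinSumFrom_succ b lam (Int.natCast_nonneg k), MStep.sum_univ]
  rcases k with _ | k
  · simp [jacobiMulVec, stepWeight, MStep.val, motzkinSumFrom_neg_one, add_comm]
  · push_cast
    simp only [jacobiMulVec, stepWeight, MStep.val, add_assoc]
    norm_num
    ring

theorem motzkinSumFrom_eq_iterate (b lam : ℕ → ℚ) (n : ℕ) :
    (fun k : ℕ => motzkinSumFrom b lam k n) = (jacobiMulVec b lam)^[n] (Pi.single 0 1) := by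
  induction n with
  | zero => funext k; simp [motzkinSumFrom_zero_right, Pi.single_apply]
  | succ n ih => rw [motzkinSumFrom_succ_eq_jacobiMulVec, ih, Function.iterate_succ_apply']

theorem motSum_eq_iterate_jacobiMulVec (b lam : ℕ → ℚ) (n : ℕ) :
    motSum n b lam = (jacobiMulVec b lam)^[n] (Pi.single 0 1) 0 := by
  rw [← motzkinSumFrom_zero_eq_motSum, ← motzkinSumFrom_eq_iterate]
  rfl

theorem iterate_jacobiMulVec_single_zero_pos {b : ℕ → ℕ} (hb : 0 < b 0) (lam : ℕ → ℕ) (n : ℕ) :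
    0 < (jacobiMulVec b lam)^[n] (Pi.single 0 1) 0 := by
  induction n with
  | zero => simp
  | succ n ih =>
    rw [Function.iterate_succ_apply']
    exact Nat.add_pos_left (Nat.mul_pos hb ih) _

theorem iterate_jacobiMulVec_natCast {S : Type*} [Semiring S] (b lam : ℕ → ℕ) (n : ℕ) :
    (jacobiMulVec (fun k => (b k : S)) (fun k => (lam k : S)))^[n] (Pi.single 0 1) =
      fun k => (((jacobiMulVec b lam)^[n] (Pi.single 0 1) k : ℕ) : S) := by
  induction n with
  | zero => funext k; simp [Pi.single_apply]
  | succ n ih =>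
    rw [Function.iterate_succ_apply', Function.iterate_succ_apply', ih]
    funext k
    cases k <;> simp [jacobiMulVec]

def lowerBidiagMulVec {R : Type*} [Semiring R] (c v : ℕ → R) : ℕ → R
  | 0 => v 0
  | k + 1 => c k * v k + v (k + 1)

def twoThrees : ℕ → ℕ
  | 0 => 2
  | _ + 1 => 3

section

variable {K : Type*} [Field K] {u b lam : ℕ → K}

theorem jacobiMulVec_lowerBidiagMulVec (hu : ∀ k, u k ≠ 0) (hu0 : u 0 = 1) (hu1 : u 1 = 1)
    (hcas : ∀ k, u (k + 2) * u k = u (k + 1) ^ 2 + 1) (hb0 : b 0 = 1) (hlam0 : lam 0 = 1)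
    (hb : ∀ k, b (k + 1) = 3 - 1 / (u (k + 1) * u k))
    (hlam : ∀ k, lam (k + 1) = 1 + 1 / u (k + 1) ^ 2)
    (v : ℕ → K) :
    jacobiMulVec b lam (lowerBidiagMulVec (fun k => u (k + 1) / u k) v) =
      lowerBidiagMulVec (fun k => u (k + 1) / u k)
        (jacobiMulVec (fun k => (twoThrees k : K)) (fun _ => 1) v) := by
  funext k
  rcases k with _ | _ | k
  · simp only [jacobiMulVec, lowerBidiagMulVec, twoThrees, hb0, hu0, hu1, div_one]
    push_cast
    ring
  · have hu2 : u 2 = 2 := by simpa [hu0, hu1, one_add_one_eq_two] using hcas 0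
    simp only [jacobiMulVec, lowerBidiagMulVec, twoThrees, hb, hlam0, hu0, hu1, hu2]
    push_cast
    ring
  · have h0 := hu k
    have h1 := hu (k + 1)
    have h2 := hu (k + 2)
    have hcas' : u (k + 3) * u (k + 1) = u (k + 2) ^ 2 + 1 := hcas (k + 1)
    simp only [jacobiMulVec, lowerBidiagMulVec, twoThrees, hb, hlam, Nat.cast_ofNat]
    field_simp
    linear_combination (-(u (k + 1) * u (k + 2) * v k)) * hcas k +
      (u (k + 1) * u k * v (k + 2)) * hcas'

theorem iterate_succ_jacobiMulVec_single (hu : ∀ k, u k ≠ 0) (hu0 : u 0 = 1) (hu1 : u 1 = 1)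
    (hcas : ∀ k, u (k + 2) * u k = u (k + 1) ^ 2 + 1) (hb0 : b 0 = 1) (hlam0 : lam 0 = 1)
    (hb : ∀ k, b (k + 1) = 3 - 1 / (u (k + 1) * u k))
    (hlam : ∀ k, lam (k + 1) = 1 + 1 / u (k + 1) ^ 2)
    (n : ℕ) :
    (jacobiMulVec b lam)^[n + 1] (Pi.single 0 1) =
      lowerBidiagMulVec (fun k => u (k + 1) / u k)
        ((jacobiMulVec (fun k => (twoThrees k : K)) (fun _ => 1))^[n] (Pi.single 0 1)) := by
  have hstart : jacobiMulVec b lam (Pi.single 0 1) =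
      lowerBidiagMulVec (fun k => u (k + 1) / u k) (Pi.single 0 1) := by
    funext k
    rcases k with _ | _ | k <;> simp [jacobiMulVec, lowerBidiagMulVec, hb0, hlam0, hu0, hu1]
  have hcomm : Function.Semiconj (lowerBidiagMulVec fun k => u (k + 1) / u k)
      (jacobiMulVec (fun k => (twoThrees k : K)) (fun _ => 1)) (jacobiMulVec b lam) := fun v =>
    (jacobiMulVec_lowerBidiagMulVec hu hu0 hu1 hcas hb0 hlam0 hb hlam v).symm
  rw [Function.iterate_succ_apply, hstart, (hcomm.iterate_right n).eq]

end

theorem fibZ_eq_fib (m : ℤ) : fibZ m = Int.fib m := by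
  rcases m with m | m
  · rfl
  · change (-1) ^ m * (Nat.fib (m + 1) : ℤ) = _
    rw [Int.negSucc_eq, ← Int.natCast_succ, Int.fib_neg_natCast, pow_succ, pow_succ]
    ring

def oddFib (k : ℕ) : ℤ := Int.fib (2 * k - 1)

@[simp] theorem oddFib_zero : oddFib 0 = 1 := rfl

@[simp] theorem oddFib_one : oddFib 1 = 1 := rfl

theorem oddFib_pos (k : ℕ) : 0 < oddFib k := by
  simpa [oddFib, mul_sub, sub_add] using Int.fib_two_mul_add_one_pos (n := k - 1)

theorem oddFib_add_two_mul_oddFib (k : ℕ) :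
    oddFib (k + 2) * oddFib k = oddFib (k + 1) ^ 2 + 1 := by
  have hcat := Int.fib_add_sq_sub_fib_mul_fib_add_two_mul (2 * k - 1) 2
  have hodd : Odd (2 * (k : ℤ) - 1).natAbs := Int.natAbs_odd.2 ⟨k - 1, by ring⟩
  rw [hodd.neg_one_pow, Int.fib_two] at hcat
  have h2 : 2 * ((k + 2 : ℕ) : ℤ) - 1 = 2 * k - 1 + 2 * 2 := by push_cast; ring
  have h1 : 2 * ((k + 1 : ℕ) : ℤ) - 1 = 2 * k - 1 + 2 := by push_cast; ring
  rw [oddFib, oddFib, oddFib, h1, h2]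
  linear_combination -hcat

theorem fibZ_two_mul_sub_one (k : ℕ) : fibZ (2 * (k : ℤ) - 1) = oddFib k := fibZ_eq_fib _

theorem fibZ_two_mul_sub_three (k : ℕ) : fibZ (2 * ((k + 1 : ℕ) : ℤ) - 3) = oddFib k := by
  rw [fibZ_eq_fib, oddFib]
  congr 1
  push_cast
  ring

/-- The rational number `Mot_n(b, λ)` is a positive integer for all `n ≥ 0`. -/
theorem motzkin_b_lambda_is_positive_integer
(b lam : ℕ → ℚ) (hb0 : b 0 = 1) (hlam0 : lam 0 = 1)
    (hb : ∀ m : ℕ, 1 ≤ m →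
      b m = 3 - 1 / ((fibZ (2 * (m : ℤ) - 1) : ℚ) * (fibZ (2 * (m : ℤ) - 3) : ℚ)))
    (hlam : ∀ m : ℕ, 1 ≤ m → lam m = 1 + 1 / (fibZ (2 * (m : ℤ) - 1) : ℚ) ^ 2)
    (n : ℕ) :
    ∃ m : ℕ, 0 < m ∧ motSum n b lam = (m : ℚ) := by
  have hu : ∀ k, (oddFib k : ℚ) ≠ 0 := fun k => by exact_mod_cast (oddFib_pos k).ne'
  have hcas : ∀ k, (oddFib (k + 2) : ℚ) * oddFib k = (oddFib (k + 1) : ℚ) ^ 2 + 1 := fun k => by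
    exact_mod_cast oddFib_add_two_mul_oddFib k
  have hb' : ∀ k, b (k + 1) = 3 - 1 / ((oddFib (k + 1) : ℚ) * oddFib k) := fun k => by
    rw [hb (k + 1) k.succ_pos, fibZ_two_mul_sub_one, fibZ_two_mul_sub_three]
  have hlam' : ∀ k, lam (k + 1) = 1 + 1 / (oddFib (k + 1) : ℚ) ^ 2 := fun k => by
    rw [hlam (k + 1) k.succ_pos, fibZ_two_mul_sub_one]
  rcases n with _ | n
  · exact ⟨1, one_pos, by simp [motSum_eq_iterate_jacobiMulVec]⟩
  · refine ⟨_, iterate_jacobiMulVec_single_zero_pos (b := twoThrees) (by decide) (fun _ => 1) n, ?_⟩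
    rw [motSum_eq_iterate_jacobiMulVec,
      iterate_succ_jacobiMulVec_single hu (by simp) (by simp) hcas hb0 hlam0 hb' hlam' n,
      lowerBidiagMulVec]
    simpa using congrFun (iterate_jacobiMulVec_natCast (S := ℚ) twoThrees (fun _ => 1) n) 0
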